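/- (Counting form of the random-walk lemma) Let g, h : ℕ → ℕ with 1 ≤ g(n) ≤ h(n) for all n. Let T be a tree containing the empty string such that every τ ∈ T has exactly h(|τ|) immediate extensions in T (in particular T is infinite and has no leaves), and let B be a set of strings that is g-small above the empty string. Then for every n, the number of strings σ ∈ T with |σ| = n such that no prefix of σ belongs to B is at least ∏_{i<n} (h(i) − g(i)). -/

import Mathlib

/-- A tree is a set of strings (finite sequences of naturals) closed under prefixes. -/
def IsTree (T : Set (List ℕ)) : Prop :=
  ∀ σ ∈ T, ∀ τ : List ℕ, τ <+: σ → τ ∈ T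

/-- A leaf of `T` is an element of `T` with no immediate extension in `T`. -/
def IsLeaf (T : Set (List ℕ)) (τ : List ℕ) : Prop :=
  τ ∈ T ∧ ∀ a : ℕ, τ ++ [a] ∉ T

/-- A tree `T` is `h`-bushy above `σ`: `σ ∈ T`, every element of `T` is comparable
with `σ`, and every non-leaf `τ ∈ T` extending `σ` has at least `h |τ|` immediate
extensions in `T`. -/
def BushyAbove (h : ℕ → ℕ) (σ : List ℕ) (T : Set (List ℕ)) : Prop :=
  IsTree T ∧ σ ∈ T ∧
  (∀ τ ∈ T, τ <+: σ ∨ σ <+: τ) ∧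
  (∀ τ ∈ T, σ <+: τ → ¬ IsLeaf T τ → (h τ.length : ℕ∞) ≤ {a : ℕ | τ ++ [a] ∈ T}.encard)

/-- `B` is `h`-big above `σ` if there is a finite tree, `h`-bushy above `σ`,
all of whose leaves belong to `B`. -/
def BigAbove (h : ℕ → ℕ) (σ : List ℕ) (B : Set (List ℕ)) : Prop :=
  ∃ T : Set (List ℕ), T.Finite ∧ BushyAbove h σ T ∧ ∀ τ, IsLeaf T τ → τ ∈ B

/-- `B` is `h`-small above `σ` if it is not `h`-big above `σ`. -/
def SmallAbove (h : ℕ → ℕ) (σ : List ℕ) (B : Set (List ℕ)) : Prop :=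
  ¬ BigAbove h σ B

/-!
If `g |σ|` children `σ ++ [a]` of `σ` are `g`-big, grafting their witnessing trees onto the
chain of prefixes of `σ` shows that `σ` is `g`-big. So a node `σ ∈ T` above which `B` is `g`-small
has at least `h |σ| - g |σ|` such children in `T`, and counting level by level the strings all of
whose prefixes are such nodes gives the bound. None of their prefixes lies in `B`, since the
prefixes of a string of `B` form a tree witnessing that `B` is `g`-big above it.
-/

open Set

theorem Set.encard_mul_le_encard_biUnion {ι α : Type*} {s : Set ι} {t : ι → Set α} {k : ℕ∞}
    (hs : s.PairwiseDisjoint t) (hk : ∀ i ∈ s, k ≤ (t i).encard) :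
    s.encard * k ≤ (⋃ i ∈ s, t i).encard := by
  rcases s.finite_or_infinite with hfin | hinf
  · rw [hfin.encard_biUnion hs]
    lift s to Finset ι using hfin
    rw [finsum_mem_coe_finset, encard_coe_eq_coe_finsetCard, ← nsmul_eq_mul, ← Finset.sum_const]
    exact Finset.sum_le_sum hk
  · rcases eq_or_ne k 0 with rfl | hk0
    · simp
    have hinj : InjOn t s := fun i hi j hj hij => by
      obtain ⟨x, hx⟩ := nonempty_of_encard_ne_zero (ne_bot_of_le_ne_bot hk0 (hk i hi))
      exact hs.elim_set hi hj x hx (hij ▸ hx)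
    rw [(hinf.biUnion hinj).encard_eq]
    exact le_top

namespace List

variable {α : Type*} {τ σ : List α}

theorem IsPrefix.antisymm (h₁ : τ <+: σ) (h₂ : σ <+: τ) : τ = σ :=
  h₁.eq_of_length (le_antisymm h₁.length_le h₂.length_le)

theorem IsPrefix.exists_append_singleton_prefix (h : τ <+: σ) (hne : τ ≠ σ) :
    ∃ b, τ ++ [b] <+: σ := by
  obtain ⟨_ | ⟨b, t⟩, rfl⟩ := h
  · simp at hne
  · exact ⟨b, t, by simp⟩

theorem finite_setOf_prefix (σ : List α) : {ρ | ρ <+: σ}.Finite :=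
  σ.inits.finite_toSet.subset fun ρ hρ => (mem_inits ρ σ).mpr hρ

end List

section Bigness

variable {g : ℕ → ℕ} {σ τ : List ℕ} {a : ℕ} {B : Set (List ℕ)}

theorem BigAbove.of_mem (hσ : σ ∈ B) : BigAbove g σ B := by
  have hσleaf : IsLeaf {ρ | ρ <+: σ} σ :=
    ⟨List.prefix_refl σ, fun a ha => by simpa using ha.length_le⟩
  refine ⟨{ρ | ρ <+: σ}, σ.finite_setOf_prefix,
    ⟨fun ρ hρ τ hτ => hτ.trans hρ, List.prefix_refl σ, fun τ hτ => Or.inl hτ, ?_⟩, ?_⟩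
  · intro τ hτ hστ hleaf
    exact absurd (hτ.antisymm hστ ▸ hσleaf) hleaf
  · rintro τ ⟨hτ, hleaf⟩
    by_contra hτB
    obtain ⟨b, hb⟩ := hτ.exists_append_singleton_prefix (by rintro rfl; exact hτB hσ)
    exact hleaf b hb

theorem SmallAbove.notMem (hs : SmallAbove g σ B) : σ ∉ B :=
  fun hσ => hs (.of_mem hσ)

theorem BushyAbove.prefix_or_prefix_of_mem {S : Set (List ℕ)} (hS : BushyAbove g (σ ++ [a]) S)
    (hτ : τ ∈ S) : τ <+: σ ∨ σ ++ [a] <+: τ := by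
  rcases hS.2.2.1 τ hτ with h | h
  · rcases List.prefix_concat_iff.mp h with rfl | h
    · exact Or.inr (List.prefix_refl _)
    · exact Or.inl h
  · exact Or.inr h

end Bigness

section Graft

variable {g : ℕ → ℕ} {σ τ : List ℕ} {a : ℕ} {A : Set ℕ} {F : ℕ → Set (List ℕ)}

def graft (σ : List ℕ) (A : Set ℕ) (F : ℕ → Set (List ℕ)) : Set (List ℕ) :=
  {ρ | ρ <+: σ} ∪ ⋃ a ∈ A, F a

theorem subset_graft (ha : a ∈ A) : F a ⊆ graft σ A F :=
  fun _ hρ => Or.inr (mem_biUnion ha hρ)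

theorem mem_graft_cases (hF : ∀ a ∈ A, BushyAbove g (σ ++ [a]) (F a))
    (hτ : τ ∈ graft σ A F) : τ <+: σ ∨ ∃ a ∈ A, σ ++ [a] <+: τ ∧ τ ∈ F a := by
  rcases hτ with hτ | hτ
  · exact Or.inl hτ
  · obtain ⟨a, ha, hτ⟩ := mem_iUnion₂.mp hτ
    exact ((hF a ha).prefix_or_prefix_of_mem hτ).imp_right fun h => ⟨a, ha, h, hτ⟩

theorem mem_graft_iff_of_prefix (hF : ∀ a ∈ A, BushyAbove g (σ ++ [a]) (F a)) (ha : a ∈ A)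
    (hτ : σ ++ [a] <+: τ) : τ ∈ graft σ A F ↔ τ ∈ F a := by
  refine ⟨fun h => ?_, fun h => subset_graft ha h⟩
  have hlen : σ.length < τ.length := by simpa using hτ.length_le
  rcases mem_graft_cases hF h with h' | ⟨b, -, hbτ, hτb⟩
  · exact absurd h'.length_le (by omega)
  · obtain rfl : b = a := by
      simpa using (List.prefix_of_prefix_length_le hbτ hτ (by simp)).eq_of_length (by simp)
    exact hτb

theorem isLeaf_graft_iff (hF : ∀ a ∈ A, BushyAbove g (σ ++ [a]) (F a)) (ha : a ∈ A)
    (hτ : σ ++ [a] <+: τ) : IsLeaf (graft σ A F) τ ↔ IsLeaf (F a) τ := by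
  have hext : ∀ b, τ ++ [b] ∈ graft σ A F ↔ τ ++ [b] ∈ F a := fun b =>
    mem_graft_iff_of_prefix hF ha (hτ.trans (List.prefix_append τ [b]))
  simp only [IsLeaf, mem_graft_iff_of_prefix hF ha hτ, hext]

theorem not_isLeaf_graft_of_prefix (hF : ∀ a ∈ A, BushyAbove g (σ ++ [a]) (F a))
    (hA : A.Nonempty) (hτ : τ <+: σ) : ¬ IsLeaf (graft σ A F) τ := by
  rintro ⟨-, hleaf⟩
  rcases eq_or_ne τ σ with rfl | hne
  · obtain ⟨a, ha⟩ := hA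
    exact hleaf a (subset_graft ha (hF a ha).2.1)
  · obtain ⟨b, hb⟩ := hτ.exists_append_singleton_prefix hne
    exact hleaf b (Or.inl hb)

theorem bushyAbove_graft (hF : ∀ a ∈ A, BushyAbove g (σ ++ [a]) (F a))
    (hA : (g σ.length : ℕ∞) ≤ A.encard) : BushyAbove g σ (graft σ A F) := by
  refine ⟨?_, Or.inl (List.prefix_refl σ), ?_, ?_⟩
  · rintro ρ (hρ | hρ) τ hτ
    · exact Or.inl (hτ.trans hρ)
    · obtain ⟨a, ha, hρ⟩ := mem_iUnion₂.mp hρ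
      exact subset_graft ha ((hF a ha).1 ρ hρ τ hτ)
  · intro τ hτ
    rcases mem_graft_cases hF hτ with h | ⟨a, -, h, -⟩
    · exact Or.inl h
    · exact Or.inr ((List.prefix_append σ [a]).trans h)
  · intro τ hτ hστ hleaf
    rcases mem_graft_cases hF hτ with h | ⟨a, ha, haτ, hτa⟩
    · obtain rfl := h.antisymm hστ
      exact hA.trans (encard_mono fun a ha => subset_graft ha (hF a ha).2.1)
    · have hleaf' : ¬ IsLeaf (F a) τ := mt (isLeaf_graft_iff hF ha haτ).mpr hleaf
      exact ((hF a ha).2.2.2 τ hτa haτ hleaf').trans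
        (encard_mono fun b hb => subset_graft ha hb)

end Graft

theorem BigAbove.of_le_encard_bigAbove_append_singleton {g : ℕ → ℕ} {σ : List ℕ}
    {B : Set (List ℕ)} (hg : 1 ≤ g σ.length)
    (hbig : (g σ.length : ℕ∞) ≤ {a | BigAbove g (σ ++ [a]) B}.encard) : BigAbove g σ B := by
  obtain ⟨A, hAbig, hAcard⟩ := exists_subset_encard_eq hbig
  have hAne : A.Nonempty :=
    nonempty_of_encard_ne_zero (by rw [hAcard]; exact_mod_cast Nat.one_le_iff_ne_zero.mp hg)
  choose! F hFfin hF hFB using hAbig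
  refine ⟨graft σ A F, ?_, bushyAbove_graft hF hAcard.ge, ?_⟩
  · exact σ.finite_setOf_prefix.union ((finite_of_encard_eq_coe hAcard).biUnion hFfin)
  · intro τ hτ
    rcases mem_graft_cases hF hτ.1 with h | ⟨a, ha, haτ, -⟩
    · exact absurd hτ (not_isLeaf_graft_of_prefix hF hAne h)
    · exact hFB ha τ ((isLeaf_graft_iff hF ha haτ).mp hτ)

theorem SmallAbove.sub_le_encard_smallAbove_append_singleton {g h : ℕ → ℕ} {σ : List ℕ}
    {T B : Set (List ℕ)} (hs : SmallAbove g σ B) (hg : 1 ≤ g σ.length)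
    (hchildren : {a | σ ++ [a] ∈ T}.encard = h σ.length) :
    ((h σ.length - g σ.length : ℕ) : ℕ∞) ≤
      {a | σ ++ [a] ∈ T ∧ SmallAbove g (σ ++ [a]) B}.encard := by
  have hbig : {a | BigAbove g (σ ++ [a]) B}.encard ≤ g σ.length :=
    le_of_not_ge fun hge => hs (.of_le_encard_bigAbove_append_singleton hg hge)
  calc ((h σ.length - g σ.length : ℕ) : ℕ∞)
      = {a | σ ++ [a] ∈ T}.encard - g σ.length := by rw [hchildren, ENat.natCast_sub]
    _ ≤ {a | σ ++ [a] ∈ T}.encard - {a | BigAbove g (σ ++ [a]) B}.encard :=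
        tsub_le_tsub_left hbig _
    _ ≤ _ := tsub_encard_le_encard_sdiff _ _

section SmallLevel

variable {g h : ℕ → ℕ} {T B : Set (List ℕ)}

def smallLevel (g : ℕ → ℕ) (T B : Set (List ℕ)) (n : ℕ) : Set (List ℕ) :=
  {σ | σ.length = n ∧ ∀ τ, τ <+: σ → τ ∈ T ∧ SmallAbove g τ B}

theorem encard_smallLevel_mul_le (hg : ∀ n, 1 ≤ g n)
    (hexact : ∀ τ ∈ T, {a : ℕ | τ ++ [a] ∈ T}.encard = (h τ.length : ℕ∞)) (n : ℕ) :
    (smallLevel g T B n).encard * (h n - g n : ℕ) ≤ (smallLevel g T B (n + 1)).encard := by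
  let children σ := (fun a => σ ++ [a]) '' {a | σ ++ [a] ∈ T ∧ SmallAbove g (σ ++ [a]) B}
  have hdisj : (smallLevel g T B n).PairwiseDisjoint children := by
    rintro σ - σ' - hne
    refine disjoint_left.mpr ?_
    rintro _ ⟨a, -, rfl⟩ ⟨a', -, heq⟩
    exact hne (List.append_inj' heq rfl).1.symm
  have hsub : ⋃ σ ∈ smallLevel g T B n, children σ ⊆ smallLevel g T B (n + 1) := by
    simp only [iUnion_subset_iff]
    rintro σ ⟨hlen, hσ⟩ _ ⟨a, ha, rfl⟩
    refine ⟨by simp [hlen], fun τ hτ => ?_⟩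
    rcases List.prefix_concat_iff.mp hτ with rfl | hτ
    · exact ha
    · exact hσ τ hτ
  refine (encard_mul_le_encard_biUnion hdisj fun σ ⟨hlen, hσ⟩ => ?_).trans (encard_mono hsub)
  obtain ⟨hσT, hσs⟩ := hσ σ (List.prefix_refl σ)
  have hinj : Function.Injective fun a : ℕ => σ ++ [a] := fun a b hab => by simpa using hab
  rw [hinj.encard_image, ← hlen]
  exact hσs.sub_le_encard_smallAbove_append_singleton (hg _) (hexact σ hσT)

theorem prod_le_encard_smallLevel (hg : ∀ n, 1 ≤ g n)
    (hnil : ([] : List ℕ) ∈ T)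
    (hexact : ∀ τ ∈ T, {a : ℕ | τ ++ [a] ∈ T}.encard = (h τ.length : ℕ∞))
    (hB : SmallAbove g [] B) (n : ℕ) :
    ((∏ i ∈ Finset.range n, (h i - g i) : ℕ) : ℕ∞) ≤ (smallLevel g T B n).encard := by
  induction n with
  | zero =>
    have hnilLevel : [] ∈ smallLevel g T B 0 :=
      ⟨rfl, fun τ hτ => List.prefix_nil.mp hτ ▸ ⟨hnil, hB⟩⟩
    simpa using ⟨[], hnilLevel⟩
  | succ n ih =>
    rw [Finset.prod_range_succ, Nat.cast_mul]
    exact (mul_le_mul_left ih _).trans (encard_smallLevel_mul_le hg hexact n)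

end SmallLevel

theorem random_walk_counting_general (g h : ℕ → ℕ) (hg : ∀ n, 1 ≤ g n)
    (T : Set (List ℕ)) (hnil : ([] : List ℕ) ∈ T)
    (hexact : ∀ τ ∈ T, {a : ℕ | τ ++ [a] ∈ T}.encard = (h τ.length : ℕ∞))
    (B : Set (List ℕ)) (hB : SmallAbove g [] B) (n : ℕ) :
    ((∏ i ∈ Finset.range n, (h i - g i) : ℕ) : ℕ∞) ≤
      {σ : List ℕ | σ ∈ T ∧ σ.length = n ∧ ∀ τ : List ℕ, τ <+: σ → τ ∉ B}.encard := by
  refine (prod_le_encard_smallLevel hg hnil hexact hB n).trans (encard_mono ?_)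
  rintro σ ⟨hlen, hσ⟩
  exact ⟨(hσ σ (List.prefix_refl σ)).1, hlen, fun τ hτ => (hσ τ hτ).2.notMem⟩

/-- Counting form of the random-walk lemma: in a tree where every node of length `i`
has exactly `h i` immediate extensions, if `B` is `g`-small above the empty string
(with `1 ≤ g ≤ h`), then at each level `n` there are at least `∏ i < n, (h i - g i)`
nodes none of whose prefixes belong to `B`. -/
theorem random_walk_counting (g h : ℕ → ℕ) (hg : ∀ n, 1 ≤ g n) (hgh : ∀ n, g n ≤ h n)
    (T : Set (List ℕ)) (hTtree : IsTree T) (hnil : ([] : List ℕ) ∈ T)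
    (hexact : ∀ τ ∈ T, {a : ℕ | τ ++ [a] ∈ T}.encard = (h τ.length : ℕ∞))
    (B : Set (List ℕ)) (hB : SmallAbove g [] B) (n : ℕ) :
    ((∏ i ∈ Finset.range n, (h i - g i) : ℕ) : ℕ∞) ≤
      {σ : List ℕ | σ ∈ T ∧ σ.length = n ∧ ∀ τ : List ℕ, τ <+: σ → τ ∉ B}.encard :=
  random_walk_counting_general g h hg T hnil hexact B hB n
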